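/- Let E be a finite group with E' ⊆ Z(E) (the commutator subgroup is central), let H be a subgroup of E, and let χ be an irreducible complex character of H such that Z(E) ∩ ker χ = {1}. Then the support of χ (the set of h ∈ H with χ(h) ≠ 0) equals the center Z(H). -/

import Mathlib

/-!
By Schur's lemma every central element `z` of `H` acts on `V` by a nonzero scalar `c`, so
`χ (z * g) = c * χ g`; in particular `χ z = c * χ 1 ≠ 0`, which gives `Z(H) ⊆ supp χ`.
Conversely, let `χ h ≠ 0` and `g ∈ H`. The commutator `z = h⁻¹ g⁻¹ h g` lies in `E' ⊆ Z(E)`, hence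
in `Z(H)`, and `g⁻¹ h g = z h`, so `χ h = c * χ h` forces `c = 1`. Then `χ z = χ 1`, i.e.
`z ∈ Z(E) ∩ ker χ = 1`, and `h` commutes with `g`.
-/

open CategoryTheory

namespace FDRep

variable {k G : Type*} [Field k] [Group G] (V : FDRep k G)

theorem nontrivial_of_simple [Simple V] : Nontrivial V := by
  by_contra h
  have : Subsingleton ((forget (FGModuleCat k)).obj V.V) := not_nontrivial_iff_subsingleton.mp h
  exact id_nonzero V (by ext v; exact Subsingleton.elim _ _)

theorem exists_ρ_eq_smul_one_of_mem_center [IsAlgClosed k] [Simple V] {z : G}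
    (hz : z ∈ Subgroup.center G) : ∃ c : k, V.ρ z = c • 1 := by
  let f : V ⟶ V := ⟨FGModuleCat.ofHom (V.ρ z), fun g => by
    ext v
    change V.ρ z (V.ρ g v) = V.ρ g (V.ρ z v)
    rw [← Module.End.mul_apply, ← map_mul, hz.comm g, map_mul, Module.End.mul_apply]⟩
  obtain ⟨c, hc⟩ := endomorphism_simple_eq_smul_id k f
  refine ⟨c, LinearMap.ext fun v => ?_⟩
  have := congrArg (fun φ : V.V ⟶ V.V => φ v) (congrArg Action.Hom.hom hc)
  simp only [FGModuleCat.obj_carrier, Action.smul_hom, Action.id_hom, ConcreteCategory.hom_ofHom,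
    f] at this
  exact this.symm

theorem exists_character_mul_eq_mul_of_mem_center [IsAlgClosed k] [Simple V] {z : G}
    (hz : z ∈ Subgroup.center G) :
    ∃ c : k, c ≠ 0 ∧ ∀ g, V.character (z * g) = c * V.character g := by
  obtain ⟨c, hc⟩ := V.exists_ρ_eq_smul_one_of_mem_center hz
  refine ⟨c, fun hc0 => ?_, fun g => ?_⟩
  · have : Nontrivial V := V.nontrivial_of_simple
    have hunit : V.ρ z * V.ρ z⁻¹ = 1 := by rw [← map_mul, mul_inv_cancel, map_one]
    rw [hc, hc0, zero_smul, zero_mul] at hunit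
    exact zero_ne_one hunit
  · change LinearMap.trace k V (V.ρ (z * g)) = c * LinearMap.trace k V (V.ρ g)
    rw [map_mul, hc, smul_mul_assoc, one_mul, map_smul, smul_eq_mul]

theorem character_ne_zero_of_mem_center [IsAlgClosed k] [CharZero k] [Simple V] {z : G}
    (hz : z ∈ Subgroup.center G) : V.character z ≠ 0 := by
  obtain ⟨c, hc0, hc⟩ := V.exists_character_mul_eq_mul_of_mem_center hz
  have : Nontrivial V := V.nontrivial_of_simple
  rw [← mul_one z, hc, char_one]
  exact mul_ne_zero hc0 (Nat.cast_ne_zero.mpr Module.finrank_pos.ne')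

theorem character_commutator_eq_char_one [IsAlgClosed k] [Simple V] {h g : G}
    (hz : h⁻¹ * g⁻¹ * h * g ∈ Subgroup.center G) (hh : V.character h ≠ 0) :
    V.character (h⁻¹ * g⁻¹ * h * g) = V.character 1 := by
  set z := h⁻¹ * g⁻¹ * h * g
  obtain ⟨c, -, hc⟩ := V.exists_character_mul_eq_mul_of_mem_center hz
  have hconj : V.character (z * h) = V.character h := by
    rw [← char_conj V h g⁻¹, inv_inv, hz.comm h]
    congr 1
    simp only [z]
    group
  have hc1 : c = 1 := by
    rw [hc] at hconj
    exact (mul_eq_right₀ hh).mp hconj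
  rw [← mul_one z, hc, hc1, one_mul]

end FDRep

theorem Subgroup.mem_center_of_coe_mem_center {E : Type*} [Group E] {H : Subgroup E} {h : H}
    (hh : (h : E) ∈ Subgroup.center E) : h ∈ Subgroup.center H :=
  Subgroup.mem_center_iff.mpr fun g => Subtype.ext (hh.comm g).symm

theorem stmt1_general {E : Type} [Group E]
    (hE : commutator E ≤ Subgroup.center E)
    (H : Subgroup E) (V : FDRep ℂ ↥H) (hV : CategoryTheory.Simple V)
    (hker : ∀ h : H, (h : E) ∈ Subgroup.center E → V.character h = V.character 1 → h = 1) :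
    {h : H | V.character h ≠ 0} = (Subgroup.center ↥H : Set ↥H) := by
  ext h
  refine ⟨fun hh => Subgroup.mem_center_iff.mpr fun g => ?_, V.character_ne_zero_of_mem_center⟩
  have hzE : ((h⁻¹ * g⁻¹ * h * g : H) : E) ∈ Subgroup.center E := hE <| by
    simpa [commutatorElement_def, commutator_def] using
      Subgroup.commutator_mem_commutator (Subgroup.mem_top (h⁻¹ : E)) (Subgroup.mem_top (g⁻¹ : E))
  have hz1 := hker _ hzE
    (V.character_commutator_eq_char_one (Subgroup.mem_center_of_coe_mem_center hzE) hh)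
  calc g * h = g * h * (h⁻¹ * g⁻¹ * h * g) := by rw [hz1, mul_one]
    _ = h * g := by group

/-- If `E' ⊆ Z(E)`, `H ≤ E`, and `χ` is an irreducible complex character of `H`
with `Z(E) ∩ ker χ = 1`, then `supp χ = Z(H)`. -/
theorem stmt1 {E : Type} [Group E] [Fintype E]
    (hE : commutator E ≤ Subgroup.center E)
    (H : Subgroup E) (V : FDRep ℂ ↥H) (hV : CategoryTheory.Simple V)
    (hker : ∀ h : H, (h : E) ∈ Subgroup.center E → V.character h = V.character 1 → h = 1) :
    {h : H | V.character h ≠ 0} = (Subgroup.center ↥H : Set ↥H) :=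
  stmt1_general hE H V hV hker
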